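/- arXiv:1904.00808 — 3 statements merged into one kernel-verified Lean document; each statement's English description precedes it below -/
import Mathlib

section
/- Let (X,d,μ) be a metric measure space and suppose there exists N ∈ ℕ such that for every Lipschitz map φ : X → ℝ^N one has μ(ind φ) = 0. Then (X,d,μ) is a Lipschitz differentiability space, and the charts can be chosen with every chart dimension n_i ≤ N − 1. -/
open MeasureTheory Metric Set Filter Topology ENNReal NNReal
open scoped RealInnerProductSpace

noncomputable section

namespace BKO

/-- `ℝⁿ` with the Euclidean metric. -/
abbrev E (n : ℕ) : Type := EuclideanSpace ℝ (Fin n)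

variable {X : Type*} [MetricSpace X]

/-- A set `G ⊆ ℝ × X` is the graph of a curve fragment if all first coordinates lie
in `[0,1]` and it is the graph of a `2`-biLipschitz function defined on a subset of `[0,1]`. -/
def IsFragmentGraph (X : Type*) [MetricSpace X] (G : Set (ℝ × X)) : Prop :=
  (∀ p ∈ G, p.1 ∈ Set.Icc (0:ℝ) 1) ∧
  ∀ p ∈ G, ∀ q ∈ G, |p.1 - q.1| ≤ 2 * dist p.2 q.2 ∧ dist p.2 q.2 ≤ 2 * |p.1 - q.1|

/-- The space `Γ(X)` of curve fragments, identified with their graphs (nonempty compact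
subsets of `[0,1] × X`), with the Hausdorff metric `d_Γ(γ₁,γ₂) = d_H(gr γ₁, gr γ₂)`. -/
def Fragment (X : Type*) [MetricSpace X] : Type _ :=
  {G : TopologicalSpace.NonemptyCompacts (ℝ × X) // IsFragmentGraph X (G : Set (ℝ × X))}

instance : MetricSpace (Fragment X) :=
  inferInstanceAs (MetricSpace {G : TopologicalSpace.NonemptyCompacts (ℝ × X) // _})

instance : MeasurableSpace (Fragment X) := borel _
instance : BorelSpace (Fragment X) := ⟨rfl⟩

namespace Fragment

/-- The graph of a curve fragment. -/
def graph (γ : Fragment X) : Set (ℝ × X) := (γ.1 : Set (ℝ × X))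

/-- The (compact) domain of a curve fragment. -/
def dom (γ : Fragment X) : Set ℝ := Prod.fst '' γ.graph

/-- The image of a curve fragment. -/
def im (γ : Fragment X) : Set X := Prod.snd '' γ.graph

/-- The function `dom γ → X` determined by the graph (junk value off the domain). -/
def fn (γ : Fragment X) (t : ℝ) : X :=
  @dite X (∃ x, (t, x) ∈ γ.graph) (Classical.dec _)
    (fun h => h.choose) (fun _ => γ.1.nonempty.choose.2)

/-- `γ_* 𝓛¹`: the pushforward under `γ` of Lebesgue measure restricted to `dom γ`. -/
def measure [MeasurableSpace X] (γ : Fragment X) : Measure X :=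
  (volume.restrict γ.dom).map γ.fn

end Fragment

/-- The measure `ν(ℙ)`, `ν(ℙ)(B) = ∫ γ_*𝓛¹(B) dℙ(γ)`. -/
def nu [MeasurableSpace X] (ℙ : Measure (Fragment X)) : Measure X :=
  ℙ.bind Fragment.measure

/-- The cone `C(w,θ) = {v : |⟨v,w⟩| ≥ θ‖v‖}`. -/
def cone {n : ℕ} (w : E n) (θ : ℝ) : Set (E n) := {v | θ * ‖v‖ ≤ |⟪v, w⟫|}

/-- A cone in `ℝⁿ` is a set of the form `C(w,θ)` with `w ∈ Sⁿ⁻¹`, `θ ∈ (0,1)`. -/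
def IsCone {n : ℕ} (C : Set (E n)) : Prop :=
  ∃ (w : E n) (θ : ℝ), ‖w‖ = 1 ∧ θ ∈ Set.Ioo (0:ℝ) 1 ∧ C = cone w θ

/-- `γ` is a `C`-curve with respect to `φ`. -/
def IsConeCurve {n : ℕ} (φ : X → E n) (C : Set (E n)) (γ : Fragment X) : Prop :=
  ∃ δ > (0:ℝ), ∀ p ∈ γ.graph, ∀ q ∈ γ.graph,
    φ p.2 - φ q.2 ∈ C \ Metric.ball 0 (δ * |p.1 - q.1|)

/-- `ℙ` is a `C`-Alberti representation of `μ` with respect to `φ`. -/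
def IsConeAlbertiRep [MeasurableSpace X] {n : ℕ} (μ : Measure X) (φ : X → E n)
    (C : Set (E n)) (ℙ : Measure (Fragment X)) : Prop :=
  IsProbabilityMeasure ℙ ∧ μ ≪ nu ℙ ∧ ∀ᵐ γ ∂ℙ, IsConeCurve φ C γ

/-- `S` is `C`-null with respect to `φ`: every `C`-curve meets `S` in `𝓗¹`-measure zero. -/
def ConeNull [MeasurableSpace X] [BorelSpace X] {n : ℕ} (φ : X → E n) (C : Set (E n))
    (S : Set X) : Prop :=
  ∀ γ : Fragment X, IsConeCurve φ C γ → μH[1] (γ.im ∩ S) = 0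

/-- Cones `C₁,…,C_m` are independent. -/
def IndepCones {n m : ℕ} (C : Fin m → Set (E n)) : Prop :=
  ∀ v : Fin m → E n, (∀ i, v i ∈ C i ∧ v i ≠ 0) → LinearIndependent ℝ v

/-- `μ` has `n` independent Alberti representations. -/
def HasIndepAlberti [MeasurableSpace X] (μ : Measure X) (n : ℕ) : Prop :=
  ∃ φ : X → E n, (∃ K, LipschitzWith K φ) ∧ ∃ C : Fin n → Set (E n),
    (∀ i, IsCone (C i)) ∧ IndepCones C ∧ ∀ i, ∃ ℙ, IsConeAlbertiRep μ φ (C i) ℙ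

/-- The collection `𝒮(φ)` of singular sets. -/
def MemScal [MeasurableSpace X] [BorelSpace X] {n : ℕ} (φ : X → E n) (S : Set X) : Prop :=
  MeasurableSet S ∧ ∀ θ ∈ Set.Ioo (0:ℝ) 1, ∃ (m : ℕ) (S' : Fin m → Set X) (w : Fin m → E n),
    S = (⋃ i, S' i) ∧ ∀ i, MeasurableSet (S' i) ∧ ‖w i‖ = 1 ∧ ConeNull φ (cone (w i) θ) (S' i)

/-- `Lip(f,x) = limsup_{r→0⁺} sup_{d(x,y)≤r} |f(y)-f(x)|/r`. -/
def lipAt (f : X → ℝ) (x : X) : ℝ :=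
  Filter.limsup (fun r : ℝ => sSup ((fun y => |f y - f x| / r) '' Metric.closedBall x r))
    (𝓝[>] (0:ℝ))

/-- `ind φ = {x : Lip(D⬝φ, x) > 0 for all D ∈ Sⁿ⁻¹}`. -/
def indSet {n : ℕ} (φ : X → E n) : Set X :=
  {x | ∀ D : E n, ‖D‖ = 1 → 0 < lipAt (fun y => ⟪φ y, D⟫) x}

/-- `f` is differentiable with respect to `φ` at `x₀`, with a unique derivative. -/
def DiffWrtAt {n : ℕ} (φ : X → E n) (f : X → ℝ) (x₀ : X) : Prop :=
  ∃! L : E n →ₗ[ℝ] ℝ,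
    Filter.Tendsto (fun x => |f x - f x₀ - L (φ x - φ x₀)| / dist x x₀) (𝓝[≠] x₀) (𝓝 0)

/-- `(X,d,μ)` is a Lipschitz differentiability space, with all chart dimensions
satisfying the predicate `P`. -/
def IsLipDiffSpaceWith [MeasurableSpace X] (μ : Measure X) (P : ℕ → Prop) : Prop :=
  ∃ (N : ℕ → ℕ) (U : ℕ → Set X) (φ : (i : ℕ) → X → E (N i)),
    (∀ i, P (N i)) ∧ (∀ i, MeasurableSet (U i)) ∧ (⋃ i, U i) = Set.univ ∧
    (∀ i, ∃ K, LipschitzWith K (φ i)) ∧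
    ∀ f : X → ℝ, (∃ K, LipschitzWith K f) →
      ∀ i, ∀ᵐ x ∂μ, x ∈ U i → DiffWrtAt (φ i) f x

/-- `ρ` is an upper gradient of `f`. -/
def IsUpperGradient (f ρ : X → ℝ) : Prop :=
  ∀ γ : ℝ → X, LipschitzOnWith 1 γ (Set.Icc 0 1) →
    |f (γ 1) - f (γ 0)| ≤ ∫ t in Set.Icc (0:ℝ) 1, ρ (γ t)

/-- `ρ` is a `*`-upper gradient of `f`. -/
def IsStarUpperGradient (f ρ : X → ℝ) : Prop :=
  ∀ γ : Fragment X, LipschitzOnWith 1 γ.fn γ.dom →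
    ∀ᵐ t ∂(volume.restrict γ.dom),
      ∀ v : ℝ, HasDerivWithinAt (f ∘ γ.fn) v γ.dom t → |v| ≤ ρ (γ.fn t)

/-- The dyadic cube of side length `2^{-m}` in `[0,1)ⁿ` indexed by `k`. -/
def dyadicCube (n m : ℕ) (k : Fin n → Fin (2 ^ m)) : Set (E n) :=
  {x | ∀ i, (k i : ℝ) / 2 ^ m ≤ x i ∧ x i < ((k i : ℝ) + 1) / 2 ^ m}

/-!
Induction on `N`. Since `ind ψ` is Borel (`Lip(g, ·)` is a limit of lower semicontinuous slope
suprema) and `μ` is σ-finite, countably many Lipschitz `ψₖ : X → ℝᴺ⁻¹` can be chosen so that the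
sets `ind ψₖ` cover every `ind ψ`, `ψ : X → ℝᴺ⁻¹`, up to null sets. Each `(ind ψₖ, ψₖ)` is a chart:
for Lipschitz `f` the set `ind (ψₖ, f)` is null, and off it some nonzero functional of `(ψₖ, f)`
has vanishing pointwise Lipschitz constant, i.e. is `o(d(·, x))`. At points of `ind ψₖ` its
`f`-coefficient is nonzero, and solving for `f` gives the derivative, unique again because no
nonzero functional of `ψₖ` is `o(d(·, x))` there. Off `⋃ₖ ind ψₖ` every `ind ψ` with
`ψ : X → ℝᴺ⁻¹` is null, so the induction hypothesis applies to the restricted measure.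
-/

section PointwiseLip

variable {g h : X → ℝ} {x y : X} {r c : ℝ} {K K' : ℝ≥0}

lemma _root_.LipschitzWith.abs_sub_le (hg : LipschitzWith K g) (y z : X) :
    |g y - g z| ≤ K * dist y z := by
  simpa [Real.dist_eq] using hg.dist_le_mul y z

lemma _root_.LipschitzWith.slope_le (hg : LipschitzWith K g) (x y : X) :
    |g y - g x| / dist y x ≤ K :=
  div_le_of_le_mul₀ dist_nonneg K.coe_nonneg (hg.abs_sub_le y x)

/-- For `y = x` the slope is `0 / 0 = 0`, so the centre does not need to be excluded. -/
def slopeSup (g : X → ℝ) (x : X) (r : ℝ) : ℝ :=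
  ⨆ y, if dist y x < r then |g y - g x| / dist y x else 0

lemma bddAbove_range_slope (hg : LipschitzWith K g) (x : X) (r : ℝ) :
    BddAbove (range fun y => if dist y x < r then |g y - g x| / dist y x else 0) := by
  refine ⟨K, ?_⟩
  rintro _ ⟨y, rfl⟩
  dsimp only
  split_ifs
  · exact hg.slope_le x y
  · exact K.coe_nonneg

lemma slopeSup_nonneg : 0 ≤ slopeSup g x r :=
  Real.iSup_nonneg fun y => by split_ifs <;> positivity

lemma slope_le_slopeSup (hg : LipschitzWith K g) (hy : dist y x < r) :
    |g y - g x| / dist y x ≤ slopeSup g x r :=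
  (if_pos hy).symm.trans_le (le_ciSup (bddAbove_range_slope hg x r) y)

lemma slopeSup_le_iff (hg : LipschitzWith K g) (hc : 0 ≤ c) :
    slopeSup g x r ≤ c ↔ ∀ y, dist y x < r → |g y - g x| / dist y x ≤ c := by
  have : Nonempty X := ⟨x⟩
  refine ⟨fun h y hy => (slope_le_slopeSup hg hy).trans h, fun h => ciSup_le fun y => ?_⟩
  split_ifs with hy
  · exact h y hy
  · exact hc

lemma lowerSemicontinuous_slopeSup (hg : LipschitzWith K g) (r : ℝ) :
    LowerSemicontinuous fun x => slopeSup g x r := by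
  refine lowerSemicontinuous_ciSup (fun x => bddAbove_range_slope hg x r) fun y x₀ => ?_
  by_cases hx₀ : dist y x₀ < r ∧ y ≠ x₀
  · refine ContinuousAt.lowerSemicontinuousAt ?_
    have hcont : ContinuousAt (fun x => |g y - g x| / dist y x) x₀ :=
      ((continuous_const.sub hg.continuous).abs.continuousAt).div
        (continuous_const.dist continuous_id).continuousAt (dist_ne_zero.2 hx₀.2)
    refine hcont.congr ?_
    filter_upwards [(isOpen_lt (continuous_const.dist continuous_id) continuous_const).mem_nhds
      hx₀.1] with x hx
    exact (if_pos hx).symm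
  · have h0 : (if dist y x₀ < r then |g y - g x₀| / dist y x₀ else 0) = 0 := by
      split_ifs with h
      · obtain rfl : y = x₀ := not_not.1 fun hne => hx₀ ⟨h, hne⟩
        simp
      · rfl
    intro a ha
    rw [h0] at ha
    exact Eventually.of_forall fun x => ha.trans_le (by split_ifs <;> positivity)

/-- `lipAt g x` is the `limsup` of `oscRatio g x r` as `r → 0⁺`. -/
def oscRatio (g : X → ℝ) (x : X) (r : ℝ) : ℝ :=
  sSup ((fun y => |g y - g x| / r) '' closedBall x r)

lemma oscRatio_image_le (hg : LipschitzWith K g) (hr : 0 ≤ r) :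
    ∀ a ∈ (fun y => |g y - g x| / r) '' closedBall x r, a ≤ K := by
  rintro _ ⟨y, hy, rfl⟩
  exact div_le_of_le_mul₀ hr K.coe_nonneg
    ((hg.abs_sub_le y x).trans (mul_le_mul_of_nonneg_left hy K.coe_nonneg))

lemma le_oscRatio (hg : LipschitzWith K g) (hr : 0 ≤ r) (hy : dist y x ≤ r) :
    |g y - g x| / r ≤ oscRatio g x r :=
  le_csSup ⟨K, oscRatio_image_le hg hr⟩ ⟨y, hy, rfl⟩

lemma oscRatio_nonneg (hg : LipschitzWith K g) (hr : 0 ≤ r) : 0 ≤ oscRatio g x r := by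
  simpa using le_oscRatio (x := x) (y := x) hg hr (by simpa using hr)

lemma oscRatio_le (hg : LipschitzWith K g) (hr : 0 ≤ r) : oscRatio g x r ≤ K :=
  csSup_le ⟨_, x, mem_closedBall_self hr, rfl⟩ (oscRatio_image_le hg hr)

lemma oscRatio_le_slopeSup (hg : LipschitzWith K g) {r' : ℝ} (hr : 0 < r) (hrr' : r < r') :
    oscRatio g x r ≤ slopeSup g x r' := by
  refine csSup_le ⟨_, x, mem_closedBall_self hr.le, rfl⟩ ?_
  rintro _ ⟨y, hy, rfl⟩
  rcases eq_or_ne y x with rfl | hyx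
  · simpa using slopeSup_nonneg
  · exact (div_le_div_of_nonneg_left (abs_nonneg _) (dist_pos.2 hyx) hy).trans
      (slope_le_slopeSup hg (hy.trans_lt hrr'))

lemma tendsto_slopeSup_lipAt (hg : LipschitzWith K g) (x : X) :
    Tendsto (slopeSup g x) (𝓝[>] 0) (𝓝 (lipAt g x)) := by
  have hpos : ∀ᶠ r in 𝓝[>] (0 : ℝ), 0 < r := self_mem_nhdsWithin
  have hbdd : IsBoundedUnder (· ≤ ·) (𝓝[>] 0) (oscRatio g x) :=
    isBoundedUnder_of_eventually_le (hpos.mono fun r hr => oscRatio_le hg hr.le)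
  have hcobdd : IsCoboundedUnder (· ≤ ·) (𝓝[>] 0) (oscRatio g x) :=
    isCoboundedUnder_le_of_eventually_le _ (hpos.mono fun r hr => oscRatio_nonneg hg hr.le)
  refine tendsto_order.2 ⟨fun a ha => ?_, fun b hb => ?_⟩
  · filter_upwards [hpos] with r' hr'
    obtain ⟨r, har, hr, hrr'⟩ := ((frequently_lt_of_lt_limsup hcobdd ha).and_eventually
      (Ioo_mem_nhdsGT hr')).exists
    exact har.trans_le (oscRatio_le_slopeSup hg hr hrr')
  · obtain ⟨b', hb', hb'b⟩ := exists_between hb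
    obtain ⟨δ, hδ, hosc⟩ :=
      (nhdsGT_basis (0 : ℝ)).eventually_iff.1 (eventually_lt_of_limsup_lt hb' hbdd)
    have hb'0 : 0 ≤ b' :=
      (oscRatio_nonneg hg (half_pos hδ).le).trans (hosc ⟨half_pos hδ, half_lt_self hδ⟩).le
    filter_upwards [Ioo_mem_nhdsGT hδ] with r hr
    refine ((slopeSup_le_iff hg hb'0).2 fun y hy => ?_).trans_lt hb'b
    rcases (dist_nonneg (x := y) (y := x)).eq_or_lt with h0 | hd
    · simpa [← h0] using hb'0
    · exact (le_oscRatio hg hd.le le_rfl).trans (hosc ⟨hd, hy.trans hr.2⟩).le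

lemma lipAt_le (hg : LipschitzWith K g) : lipAt g x ≤ K :=
  le_of_tendsto (tendsto_slopeSup_lipAt hg x) <| Eventually.of_forall fun _ =>
    (slopeSup_le_iff hg K.coe_nonneg).2 fun y _ => hg.slope_le x y

lemma slopeSup_add_le (hg : LipschitzWith K g) (hh : LipschitzWith K' h) :
    slopeSup (fun y => g y + h y) x r ≤ slopeSup g x r + slopeSup h x r := by
  refine (slopeSup_le_iff (hg.add hh) (add_nonneg slopeSup_nonneg slopeSup_nonneg)).2
    fun y hy => ?_
  calc |g y + h y - (g x + h x)| / dist y x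
      ≤ |g y - g x| / dist y x + |h y - h x| / dist y x := by
        rw [← add_div, add_sub_add_comm]
        exact div_le_div_of_nonneg_right (abs_add_le _ _) dist_nonneg
    _ ≤ slopeSup g x r + slopeSup h x r :=
        add_le_add (slope_le_slopeSup hg hy) (slope_le_slopeSup hh hy)

lemma lipAt_add_le (hg : LipschitzWith K g) (hh : LipschitzWith K' h) :
    lipAt (fun y => g y + h y) x ≤ lipAt g x + lipAt h x :=
  le_of_tendsto_of_tendsto' (tendsto_slopeSup_lipAt (hg.add hh) x)
    ((tendsto_slopeSup_lipAt hg x).add (tendsto_slopeSup_lipAt hh x))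
    fun _ => slopeSup_add_le hg hh

lemma measurable_lipAt [MeasurableSpace X] [OpensMeasurableSpace X] (hg : LipschitzWith K g) :
    Measurable (lipAt g) := by
  refine measurable_of_tendsto_metrizable (f := fun n x => slopeSup g x (1 / (n + 1)))
    (fun n => (lowerSemicontinuous_slopeSup hg _).measurable) (tendsto_pi_nhds.2 fun x => ?_)
  exact (tendsto_slopeSup_lipAt hg x).comp <| tendsto_nhdsWithin_iff.2
    ⟨tendsto_one_div_add_atTop_nhds_zero_nat,
      Eventually.of_forall fun _ => mem_Ioi.2 Nat.one_div_pos_of_nat⟩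

end PointwiseLip

section Flat

variable {g h : X → ℝ} {x : X} {K : ℝ≥0}

def IsFlatAt (g : X → ℝ) (x : X) : Prop :=
  (fun y => g y - g x) =o[𝓝[≠] x] fun y => dist y x

lemma isFlatAt_iff_tendsto :
    IsFlatAt g x ↔ Tendsto (fun y => |g y - g x| / dist y x) (𝓝[≠] x) (𝓝 0) := by
  rw [IsFlatAt, Asymptotics.isLittleO_iff_tendsto'
    (Eventually.of_forall fun y hy => by rw [dist_eq_zero.1 hy, sub_self]),
    tendsto_zero_iff_abs_tendsto_zero]
  simp only [Function.comp_def, abs_div, abs_dist]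

lemma IsFlatAt.sub (hg : IsFlatAt g x) (hh : IsFlatAt h x) :
    IsFlatAt (fun y => g y - h y) x :=
  (Asymptotics.IsLittleO.sub hg hh).congr_left fun _ => by ring

lemma IsFlatAt.const_mul (hg : IsFlatAt g x) (c : ℝ) : IsFlatAt (fun y => c * g y) x :=
  (Asymptotics.IsLittleO.const_mul_left hg c).congr_left fun _ => by ring

lemma lipAt_nonpos_iff_isFlatAt (hg : LipschitzWith K g) : lipAt g x ≤ 0 ↔ IsFlatAt g x := by
  simp only [IsFlatAt, Asymptotics.isLittleO_iff, Real.norm_eq_abs, abs_dist]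
  constructor
  · intro hlip c hc
    obtain ⟨r, hr, hr0⟩ := (((tendsto_slopeSup_lipAt hg x).eventually
      (gt_mem_nhds (hlip.trans_lt hc))).and self_mem_nhdsWithin).exists
    filter_upwards [nhdsWithin_le_nhds (ball_mem_nhds x hr0), self_mem_nhdsWithin]
      with y hy hyx
    exact (div_le_iff₀ (dist_pos.2 hyx)).1 ((slopeSup_le_iff hg hc.le).1 hr.le y hy)
  · intro hflat
    refine le_of_forall_pos_le_add fun c hc => ?_
    obtain ⟨δ, hδ, hball⟩ := Metric.mem_nhdsWithin_iff.1 (hflat hc)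
    rw [zero_add]
    refine le_of_tendsto (tendsto_slopeSup_lipAt hg x) ?_
    filter_upwards [Ioo_mem_nhdsGT hδ] with r hr
    refine (slopeSup_le_iff hg hc.le).2 fun y hy => ?_
    rcases eq_or_ne y x with rfl | hyx
    · simpa using hc.le
    · exact div_le_of_le_mul₀ dist_nonneg hc.le (hball ⟨mem_ball.2 (hy.trans hr.2), hyx⟩)

end Flat

section Measurability

variable {Z : Type*} [MeasurableSpace Z]

lemma measurableSet_setOf_forall_pos {P : Type*} [MetricSpace P] {s : Set P} (hs : IsCompact s)
    {G : P → Z → ℝ} (hGc : ∀ x, Continuous (G · x)) (hGm : ∀ p, Measurable (G p)) :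
    MeasurableSet {x | ∀ p ∈ s, 0 < G p x} := by
  obtain ⟨t, hts, htc, hst⟩ := hs.isSeparable.exists_countable_dense_subset
  have : {x | ∀ p ∈ s, 0 < G p x} = ⋃ m : ℕ, ⋂ p ∈ t, {x | 1 / (m + 1 : ℝ) ≤ G p x} := by
    ext x
    simp only [mem_ofPred_eq, mem_iUnion, mem_iInter]
    constructor
    · intro hx
      obtain ⟨a, ha, hlow⟩ := hs.exists_forall_le' (hGc x).continuousOn hx
      obtain ⟨m, hm⟩ := exists_nat_one_div_lt ha
      exact ⟨m, fun p hp => hm.le.trans (hlow p (hts hp))⟩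
    · rintro ⟨m, hm⟩ p hp
      have hclosed : closure t ⊆ {p | 1 / (m + 1 : ℝ) ≤ G p x} :=
        closure_minimal hm (isClosed_le continuous_const (hGc x))
      exact Nat.one_div_pos_of_nat.trans_le (hclosed (hst hp))
  rw [this]
  exact MeasurableSet.iUnion fun m =>
    MeasurableSet.biInter htc fun p _ => measurableSet_le measurable_const (hGm p)

end Measurability

section IndSet

variable {F : Type*} [NormedAddCommGroup F] [InnerProductSpace ℝ F]
  {n : ℕ} {ψ : X → E n} {x : X} {K : ℝ≥0}

lemma _root_.LipschitzWith.inner_const {ψ : X → F} (hψ : LipschitzWith K ψ) (D : F) :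
    LipschitzWith (K * ‖D‖₊) fun y => ⟪ψ y, D⟫ :=
  LipschitzWith.of_dist_le_mul fun y z => by
    rw [Real.dist_eq, ← inner_sub_left, NNReal.coe_mul, coe_nnnorm, mul_right_comm]
    exact (abs_real_inner_le_norm _ _).trans
      (mul_le_mul_of_nonneg_right (by simpa [dist_eq_norm] using hψ.dist_le_mul y z)
        (norm_nonneg D))

lemma lipschitzWith_lipAt_inner {ψ : X → F} (hψ : LipschitzWith K ψ) (x : X) :
    LipschitzWith K fun D => lipAt (fun y => ⟪ψ y, D⟫) x := by
  refine LipschitzWith.of_le_add_mul K fun D D' => ?_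
  have hsplit : (fun y => ⟪ψ y, D⟫) = fun y => ⟪ψ y, D'⟫ + ⟪ψ y, D - D'⟫ := by
    funext y
    rw [inner_sub_right]
    ring
  calc lipAt (fun y => ⟪ψ y, D⟫) x
      ≤ lipAt (fun y => ⟪ψ y, D'⟫) x + lipAt (fun y => ⟪ψ y, D - D'⟫) x :=
        hsplit ▸ lipAt_add_le (hψ.inner_const D') (hψ.inner_const (D - D'))
    _ ≤ lipAt (fun y => ⟪ψ y, D'⟫) x + K * dist D D' := by
        gcongr
        simpa [dist_eq_norm] using lipAt_le (hψ.inner_const (D - D'))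

lemma mem_indSet_iff (hψ : LipschitzWith K ψ) :
    x ∈ indSet ψ ↔ ∀ ℓ : E n →ₗ[ℝ] ℝ, IsFlatAt (fun y => ℓ (ψ y)) x → ℓ = 0 := by
  simp only [indSet, mem_ofPred_eq]
  constructor
  · intro hx ℓ hℓ
    by_contra hne
    set w := (InnerProductSpace.toDual ℝ (E n)).symm (LinearMap.toContinuousLinearMap ℓ)
    have hw : ∀ v, ⟪v, w⟫ = ℓ v := fun v => by
      rw [real_inner_comm, InnerProductSpace.toDual_symm_apply]
      rfl
    have hw0 : w ≠ 0 := fun h => hne <| LinearMap.ext fun v => by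
      rw [← hw, h, inner_zero_right, LinearMap.zero_apply]
    have hD : ‖‖w‖⁻¹ • w‖ = 1 := by
      rw [norm_smul, norm_inv, norm_norm, inv_mul_cancel₀ (norm_ne_zero_iff.2 hw0)]
    refine (hx _ hD).not_ge ((lipAt_nonpos_iff_isFlatAt (hψ.inner_const _)).2 ?_)
    convert hℓ.const_mul ‖w‖⁻¹ using 2 with y
    rw [real_inner_smul_right, hw]
  · intro h D hD
    by_contra! hle
    have hflat := (lipAt_nonpos_iff_isFlatAt (hψ.inner_const D)).1 hle
    have hD0 := LinearMap.congr_fun (h (innerₛₗ ℝ D) (by simpa [real_inner_comm] using hflat)) D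
    rw [innerₛₗ_apply_apply, LinearMap.zero_apply, inner_self_eq_zero] at hD0
    simp [hD0] at hD

lemma indSet_of_dim_zero (ψ : X → E 0) : indSet ψ = univ :=
  eq_univ_of_forall fun _ D hD => by simp [Subsingleton.elim D 0] at hD

variable [MeasurableSpace X] [OpensMeasurableSpace X]

lemma measurableSet_indSet (hψ : LipschitzWith K ψ) : MeasurableSet (indSet ψ) := by
  have : indSet ψ = {x | ∀ D ∈ sphere (0 : E n) 1, 0 < lipAt (fun y => ⟪ψ y, D⟫) x} := by
    ext
    simp [indSet]
  rw [this]
  exact measurableSet_setOf_forall_pos (isCompact_sphere 0 1)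
    (fun x => (lipschitzWith_lipAt_inner hψ x).continuous)
    fun D => measurable_lipAt (hψ.inner_const D)

end IndSet

section Differentiability

variable {n : ℕ} {ψ : X → E n} {f : X → ℝ} {x : X} {K K' : ℝ≥0}

lemma eq_of_isFlatAt_sub (hψ : LipschitzWith K ψ) (hx : x ∈ indSet ψ) {L L' : E n →ₗ[ℝ] ℝ}
    (hL : IsFlatAt (fun y => f y - L (ψ y)) x) (hL' : IsFlatAt (fun y => f y - L' (ψ y)) x) :
    L = L' := by
  have h := (mem_indSet_iff hψ).1 hx (L' - L) (by simpa using hL.sub hL')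
  exact (sub_eq_zero.1 h).symm

lemma diffWrtAt_of_isFlatAt (hψ : LipschitzWith K ψ) (hx : x ∈ indSet ψ) {L : E n →ₗ[ℝ] ℝ}
    (hL : IsFlatAt (fun y => f y - L (ψ y)) x) : DiffWrtAt ψ f x := by
  have hiff : ∀ L : E n →ₗ[ℝ] ℝ, IsFlatAt (fun y => f y - L (ψ y)) x ↔
      Tendsto (fun y => |f y - f x - L (ψ y - ψ x)| / dist y x) (𝓝[≠] x) (𝓝 0) := by
    intro L
    rw [isFlatAt_iff_tendsto]
    congr! 4 with y
    rw [map_sub]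
    ring
  exact ⟨L, (hiff L).1 hL, fun L' hL' => eq_of_isFlatAt_sub hψ hx ((hiff L').2 hL') hL⟩

/-- Some nonzero functional of `(ψ, f)` is flat at `x`; its `f`-coefficient is nonzero because
`x ∈ ind ψ`, and solving for `f` gives the derivative. -/
lemma exists_isFlatAt_sub_of_notMem_indSet {m : ℕ} (e : (E n × ℝ) ≃L[ℝ] E m)
    (hψ : LipschitzWith K ψ) (hf : LipschitzWith K' f) (hx : x ∈ indSet ψ)
    (hxe : x ∉ indSet fun y => e (ψ y, f y)) :
    ∃ L : E n →ₗ[ℝ] ℝ, IsFlatAt (fun y => f y - L (ψ y)) x := by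
  rw [mem_indSet_iff (ψ := fun y => e (ψ y, f y)) (e.lipschitz.comp (hψ.prodMk hf))] at hxe
  push Not at hxe
  obtain ⟨ℓ, hflat, hℓ⟩ := hxe
  set Λ : E n × ℝ →ₗ[ℝ] ℝ := ℓ ∘ₗ (e : E n × ℝ →ₗ[ℝ] E m)
  set Λ₁ : E n →ₗ[ℝ] ℝ := Λ ∘ₗ LinearMap.inl ℝ (E n) ℝ
  set a : ℝ := Λ (0, 1)
  have hΛ : ∀ v s, Λ (v, s) = Λ₁ v + a * s := fun v s => by
    rw [show ((v, s) : E n × ℝ) = (v, 0) + s • (0, 1) by simp, map_add, map_smul, smul_eq_mul,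
      mul_comm]
    rfl
  have hflat' : IsFlatAt (fun y => Λ₁ (ψ y) + a * f y) x := by
    simpa [Λ, ← hΛ] using hflat
  by_cases ha : a = 0
  · refine absurd (LinearMap.ext fun u => ?_) hℓ
    have hΛ₁ : Λ₁ = 0 := (mem_indSet_iff hψ).1 hx Λ₁ (by simpa [ha] using hflat')
    calc ℓ u = Λ ((e.symm u).1, (e.symm u).2) := by simp [Λ]
      _ = 0 := by rw [hΛ, hΛ₁, ha]; simp
  · refine ⟨-a⁻¹ • Λ₁, ?_⟩
    convert hflat'.const_mul a⁻¹ using 2 with y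
    simp only [LinearMap.smul_apply, smul_eq_mul]
    field_simp
    ring

end Differentiability

section Cover

variable {α ι : Type*} [MeasurableSpace α]

/-- `J` maximizes `ν (⋃ j ∈ J, s j)` for a finite measure `ν` with `μ ≪ ν`. -/
lemma exists_countable_measure_diff_biUnion_eq_zero (μ : Measure α) [SigmaFinite μ]
    {s : ι → Set α} (hs : ∀ i, MeasurableSet (s i)) :
    ∃ J : Set ι, J.Countable ∧ ∀ i, μ (s i \ ⋃ j ∈ J, s j) = 0 := by
  obtain ⟨ν, _, hμν, -⟩ := exists_isFiniteMeasure_absolutelyContinuous μ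
  let F : {J : Set ι // J.Countable} → ℝ≥0∞ := fun J => ν (⋃ j ∈ J.1, s j)
  obtain ⟨u, -, hu, humem⟩ := exists_seq_tendsto_sSup
    ⟨F ⟨∅, countable_empty⟩, mem_range_self _⟩ (OrderTop.bddAbove _)
  choose J hJ using humem
  let J' := ⋃ k, (J k).1
  have hJ' : J'.Countable := countable_iUnion fun k => (J k).2
  have hle : ∀ (J'' : Set ι) (h : J''.Countable), F ⟨J'', h⟩ ≤ F ⟨J', hJ'⟩ := fun J'' h =>
    (le_sSup (mem_range_self _)).trans <| le_of_tendsto' hu fun k => (hJ k).symm.trans_le <|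
      measure_mono (biUnion_subset_biUnion_left (subset_iUnion (fun k => (J k).1) k))
  refine ⟨J', hJ', fun i => hμν ?_⟩
  have hmeas : MeasurableSet (⋃ j ∈ J', s j) := MeasurableSet.biUnion hJ' fun j _ => hs j
  have hunion := measure_union (μ := ν) disjoint_sdiff_right ((hs i).diff hmeas)
  rw [union_sdiff_self, union_comm, ← biUnion_insert] at hunion
  have := hunion.symm.trans_le (hle _ (hJ'.insert i))
  exact nonpos_iff_eq_zero.1 (ENNReal.le_of_add_le_add_left (measure_ne_top ν _)
    (this.trans_eq (add_zero _).symm))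

lemma exists_seq_measure_diff_iUnion_eq_zero [Nonempty ι] (μ : Measure α) [SigmaFinite μ]
    {s : ι → Set α} (hs : ∀ i, MeasurableSet (s i)) :
    ∃ v : ℕ → ι, ∀ i, μ (s i \ ⋃ k, s (v k)) = 0 := by
  obtain ⟨J, hJ, hJs⟩ := exists_countable_measure_diff_biUnion_eq_zero μ hs
  obtain ⟨v, hv⟩ := (hJ.insert (Classical.arbitrary ι)).exists_eq_range (insert_nonempty _ _)
  refine ⟨v, fun i => measure_mono_null (sdiff_subset_sdiff_right ?_) (hJs i)⟩
  refine iUnion₂_subset fun j hj => ?_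
  obtain ⟨k, rfl⟩ : j ∈ range v := hv ▸ mem_insert_of_mem _ hj
  exact subset_iUnion (fun k => s (v k)) k

end Cover

section Charts

variable [MeasurableSpace X] {μ : Measure X} {n : ℕ} {P Q : ℕ → Prop} {S T U : Set X}

def IsChart (μ : Measure X) (U : Set X) (φ : X → E n) : Prop :=
  MeasurableSet U ∧ (∃ K, LipschitzWith K φ) ∧
    ∀ f : X → ℝ, (∃ K, LipschitzWith K f) → ∀ᵐ x ∂μ, x ∈ U → DiffWrtAt φ f x

lemma IsChart.of_restrict {φ : X → E n} (hS : MeasurableSet S) (h : IsChart (μ.restrict S) U φ) :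
    IsChart μ (S ∩ U) φ := by
  obtain ⟨hU, hφ, hdiff⟩ := h
  refine ⟨hS.inter hU, hφ, fun f hf => ?_⟩
  filter_upwards [(ae_restrict_iff' hS).1 (hdiff f hf)] with x hx hxSU
  exact hx hxSU.1 hxSU.2

def HasChartsOn (μ : Measure X) (P : ℕ → Prop) (S : Set X) : Prop :=
  ∃ (N : ℕ → ℕ) (U : ℕ → Set X) (φ : (i : ℕ) → X → E (N i)),
    (∀ i, P (N i)) ∧ S ⊆ ⋃ i, U i ∧ ∀ i, IsChart μ (U i) (φ i)

lemma HasChartsOn.mono (h : HasChartsOn μ P S) (hPQ : ∀ k, P k → Q k) (hTS : T ⊆ S) :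
    HasChartsOn μ Q T :=
  let ⟨N, U, φ, hP, hS, hφ⟩ := h
  ⟨N, U, φ, fun i => hPQ _ (hP i), hTS.trans hS, hφ⟩

lemma HasChartsOn.union (hS : HasChartsOn μ P S) (hT : HasChartsOn μ P T) :
    HasChartsOn μ P (S ∪ T) := by
  obtain ⟨N₁, U₁, φ₁, hP₁, hS₁, hφ₁⟩ := hS
  obtain ⟨N₂, U₂, φ₂, hP₂, hS₂, hφ₂⟩ := hT
  let e : ℕ ≃ ℕ ⊕ ℕ := Equiv.natSumNatEquivNat.symm
  let φ : (j : ℕ ⊕ ℕ) → X → E (Sum.elim N₁ N₂ j) := fun j => Sum.rec φ₁ φ₂ j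
  have hP (j : ℕ ⊕ ℕ) : P (Sum.elim N₁ N₂ j) := by cases j <;> simp [hP₁, hP₂]
  have hφ (j : ℕ ⊕ ℕ) : IsChart μ (Sum.elim U₁ U₂ j) (φ j) := by
    cases j
    · exact hφ₁ _
    · exact hφ₂ _
  refine ⟨fun i => Sum.elim N₁ N₂ (e i), fun i => Sum.elim U₁ U₂ (e i), fun i => φ (e i),
    fun i => hP (e i), ?_, fun i => hφ (e i)⟩
  rw [e.surjective.iUnion_comp (Sum.elim U₁ U₂), iUnion_sum]
  exact union_subset_union hS₁ hS₂

lemma HasChartsOn.of_restrict (hS : MeasurableSet S) (h : HasChartsOn (μ.restrict S) P T) :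
    HasChartsOn μ P (S ∩ T) :=
  let ⟨N, U, φ, hP, hT, hφ⟩ := h
  ⟨N, fun i => S ∩ U i, φ, hP, by rw [← inter_iUnion]; exact inter_subset_inter_right S hT,
    fun i => (hφ i).of_restrict hS⟩

lemma hasChartsOn_zero (hP : P 0) : HasChartsOn (0 : Measure X) P univ :=
  ⟨fun _ => 0, fun _ => univ, fun _ _ => 0, fun _ => hP, subset_iUnion (fun _ => univ) 0,
    fun _ => ⟨MeasurableSet.univ, ⟨0, LipschitzWith.const 0⟩, fun _ _ => by simp⟩⟩

lemma HasChartsOn.isLipDiffSpaceWith (h : HasChartsOn μ P univ) : IsLipDiffSpaceWith μ P :=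
  let ⟨N, U, φ, hP, hU, hφ⟩ := h
  ⟨N, U, φ, hP, fun i => (hφ i).1, univ_subset_iff.1 hU, fun i => (hφ i).2.1,
    fun f hf i => (hφ i).2.2 f hf⟩

variable [OpensMeasurableSpace X]

lemma isChart_indSet
    (hN : ∀ Φ : X → E (n + 1), (∃ K, LipschitzWith K Φ) → μ (indSet Φ) = 0)
    {K : ℝ≥0} {ψ : X → E n} (hψ : LipschitzWith K ψ) : IsChart μ (indSet ψ) ψ := by
  refine ⟨measurableSet_indSet hψ, ⟨K, hψ⟩, fun f ⟨K', hf⟩ => ?_⟩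
  let e : (E n × ℝ) ≃L[ℝ] E (n + 1) := ContinuousLinearEquiv.ofFinrankEq (by simp)
  have hnull := hN (fun y => e (ψ y, f y)) ⟨_, e.lipschitz.comp (hψ.prodMk hf)⟩
  filter_upwards [measure_eq_zero_iff_ae_notMem.1 hnull] with x hxe hx
  obtain ⟨L, hL⟩ := exists_isFlatAt_sub_of_notMem_indSet e hψ hf hx hxe
  exact diffWrtAt_of_isFlatAt hψ hx hL

theorem hasChartsOn_univ_of_indSet_null (n : ℕ) (μ : Measure X) [SigmaFinite μ]
    (h : ∀ φ : X → E n, (∃ K, LipschitzWith K φ) → μ (indSet φ) = 0) :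
    HasChartsOn μ (· ≤ n - 1) univ := by
  induction n generalizing μ with
  | zero =>
    have hμ : μ = 0 := by
      simpa [indSet_of_dim_zero] using h 0 ⟨0, LipschitzWith.const 0⟩
    exact hμ ▸ hasChartsOn_zero le_rfl
  | succ n ih =>
    let Lip := {ψ : X → E n // ∃ K, LipschitzWith K ψ}
    have : Nonempty Lip := ⟨⟨0, 0, LipschitzWith.const 0⟩⟩
    have hmeas (ψ : Lip) : MeasurableSet (indSet ψ.1) :=
      ψ.2.elim fun _ hK => measurableSet_indSet hK
    obtain ⟨v, hv⟩ := exists_seq_measure_diff_iUnion_eq_zero μ hmeas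
    set V := ⋃ k, indSet (v k).1
    have hV : MeasurableSet V := MeasurableSet.iUnion fun k => hmeas (v k)
    have hchartsV : HasChartsOn μ (· ≤ n) V :=
      ⟨fun _ => n, fun k => indSet (v k).1, fun k => (v k).1, fun _ => le_rfl, subset_rfl,
        fun k => (v k).2.elim fun _ hK => isChart_indSet h hK⟩
    have hchartsVc : HasChartsOn (μ.restrict Vᶜ) (· ≤ n - 1) univ := ih _ fun ψ hψ => by
      rw [Measure.restrict_apply (hmeas ⟨ψ, hψ⟩)]
      exact hv ⟨ψ, hψ⟩
    have hchartsVc' : HasChartsOn μ (· ≤ n) (Vᶜ ∩ univ) :=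
      (hchartsVc.of_restrict hV.compl).mono (fun k hk => hk.trans (Nat.sub_le n 1)) subset_rfl
    refine (hchartsV.union hchartsVc').mono (fun _ => id) ?_
    rw [inter_univ, union_compl_self]

end Charts

variable {X : Type*} [MetricSpace X] [CompleteSpace X] [TopologicalSpace.SeparableSpace X]
  [MeasurableSpace X] [BorelSpace X]

/-- If there is `N` such that `μ(ind φ) = 0` for every Lipschitz
`φ : X → ℝᴺ`, then `(X,d,μ)` is a Lipschitz differentiability space with chart
dimensions at most `N - 1`. -/
theorem lipDiff_of_ind_null (μ : Measure X) [SigmaFinite μ] (N : ℕ)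
    (h : ∀ φ : X → E N, (∃ K, LipschitzWith K φ) → μ (indSet φ) = 0) :
    IsLipDiffSpaceWith μ (fun k => k ≤ N - 1) :=
  (hasChartsOn_univ_of_indSet_null N μ h).isLipDiffSpaceWith

end BKO
end
end

section
/- Let X be a metric space and let C ⊂ X be closed. Then the map Γ(X) → ℝ given by γ ↦ γ_*𝓛¹(C) is upper semi-continuous, where Γ(X) carries the metric d_Γ(γ₁,γ₂) = d_H(gr(γ₁), gr(γ₂)). -/
/-!
For closed `C`, `γ_*𝓛¹(C)` is the Lebesgue measure of the projection to the time axis of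
`gr γ ∩ (ℝ × C)`. By outer regularity this projection lies in an open `U` of measure still
below a given bound, and every graph Hausdorff-close to `gr γ` meets the closed set `ℝ × C`
inside the open set `U × X`, so its projection lies in `U` too.
-/

open MeasureTheory Metric Set Filter Topology ENNReal NNReal
open scoped RealInnerProductSpace

noncomputable section

namespace BKO

variable {X : Type*} [MetricSpace X]

variable {X : Type*} [MetricSpace X] [MeasurableSpace X] [BorelSpace X]

section

variable {Y Z : Type*} [MetricSpace Y]

/-- A Lebesgue number `ε` of the cover `K ⊆ V ∪ Fᶜ` works: every point within `ε` of `K`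
lies in a ball contained in `V` or missing `F`. -/
theorem _root_.TopologicalSpace.NonemptyCompacts.eventually_inter_subset
    {K : TopologicalSpace.NonemptyCompacts Y} {F V : Set Y} (hF : IsClosed F) (hV : IsOpen V)
    (hKFV : (K : Set Y) ∩ F ⊆ V) :
    ∀ᶠ K' : TopologicalSpace.NonemptyCompacts Y in 𝓝 K, (K' : Set Y) ∩ F ⊆ V := by
  have hcover : (K : Set Y) ⊆ ⋃₀ {V, Fᶜ} := fun x hx => by
    by_cases hxF : x ∈ F
    · exact ⟨V, by simp, hKFV ⟨hx, hxF⟩⟩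
    · exact ⟨Fᶜ, by simp, hxF⟩
  obtain ⟨ε, hε, hball⟩ := lebesgue_number_lemma_of_metric_sUnion K.isCompact
    (by simp [hV, hF]) hcover
  rw [Metric.eventually_nhds_iff]
  refine ⟨ε, hε, fun K' hK' x ⟨hxK', hxF⟩ => ?_⟩
  obtain ⟨y, hyK, hxy⟩ := exists_dist_lt_of_hausdorffDist_lt hxK' hK'
    (hausdorffEDist_ne_top_of_nonempty_of_bounded K'.nonempty K.nonempty
      K'.isCompact.isBounded K.isCompact.isBounded)
  obtain ⟨U, hU, hyU⟩ := hball y hyK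
  have hxU : x ∈ U := hyU hxy
  rcases hU with rfl | rfl
  · exact hxU
  · exact absurd hxF hxU

theorem _root_.upperSemicontinuous_measure_image_inter [TopologicalSpace Z] [MeasurableSpace Z]
    (μ : Measure Z) [μ.OuterRegular] {f : Y → Z} (hf : Continuous f) {F : Set Y}
    (hF : IsClosed F) :
    UpperSemicontinuous fun K : TopologicalSpace.NonemptyCompacts Y => μ (f '' (K ∩ F)) := by
  intro K r hr
  obtain ⟨U, hKU, hU, hμU⟩ := Set.exists_isOpen_lt_of_lt _ r hr
  filter_upwards [K.eventually_inter_subset hF (hU.preimage hf) (image_subset_iff.mp hKU)]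
    with K' hK' using (measure_mono (image_subset_iff.mpr hK')).trans_lt hμU

theorem _root_.UpperSemicontinuous.ennreal_toReal {α : Type*} [TopologicalSpace α]
    {f : α → ℝ≥0∞} (hf : UpperSemicontinuous f) (hfin : ∀ x, f x ≠ ∞) :
    UpperSemicontinuous fun x => (f x).toReal := fun x y hy => by
  filter_upwards [hf x _ ((ENNReal.lt_ofReal_iff_toReal_lt (hfin x)).mpr hy)]
    with x' hx' using ENNReal.toReal_lt_of_lt_ofReal hx'

end

namespace Fragment

variable {Y : Type*} [MetricSpace Y] (γ : Fragment Y)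

theorem isCompact_graph : IsCompact γ.graph := γ.1.isCompact

theorem isCompact_dom : IsCompact γ.dom := γ.isCompact_graph.image continuous_fst

theorem eq_of_mem_graph {t : ℝ} {x y : Y} (hx : (t, x) ∈ γ.graph) (hy : (t, y) ∈ γ.graph) :
    x = y := by
  have h := (γ.2.2 (t, x) hx (t, y) hy).2
  simp only [sub_self, abs_zero, mul_zero] at h
  exact dist_le_zero.mp h

theorem mem_graph_fn {t : ℝ} (ht : t ∈ γ.dom) : (t, γ.fn t) ∈ γ.graph := by
  obtain ⟨p, hp, rfl⟩ := ht
  have hex : ∃ x, (p.1, x) ∈ γ.graph := ⟨p.2, hp⟩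
  rw [Fragment.fn, dif_pos hex]
  exact hex.choose_spec

theorem lipschitzOnWith_fn : LipschitzOnWith 2 γ.fn γ.dom :=
  LipschitzOnWith.of_dist_le_mul fun s hs t ht => by
    simpa [Real.dist_eq] using
      (γ.2.2 (s, γ.fn s) (γ.mem_graph_fn hs) (t, γ.fn t) (γ.mem_graph_fn ht)).2

theorem preimage_fn_inter_dom (C : Set Y) :
    γ.fn ⁻¹' C ∩ γ.dom = Prod.fst '' (γ.graph ∩ Prod.snd ⁻¹' C) := by
  ext t
  constructor
  · rintro ⟨htC, htdom⟩
    exact ⟨(t, γ.fn t), ⟨γ.mem_graph_fn htdom, htC⟩, rfl⟩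
  · rintro ⟨p, ⟨hpg, hpC⟩, rfl⟩
    have hdom : p.1 ∈ γ.dom := ⟨p, hpg, rfl⟩
    have hfn : γ.fn p.1 = p.2 := γ.eq_of_mem_graph (γ.mem_graph_fn hdom) hpg
    exact ⟨by rwa [Set.mem_preimage, hfn], hdom⟩

instance [MeasurableSpace Y] : IsFiniteMeasure γ.measure := by
  have : IsFiniteMeasure (volume.restrict γ.dom) :=
    isFiniteMeasure_restrict.2 γ.isCompact_dom.measure_lt_top.ne
  rw [Fragment.measure]
  infer_instance

theorem measure_apply [MeasurableSpace Y] [BorelSpace Y] {C : Set Y} (hC : MeasurableSet C) :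
    γ.measure C = volume (Prod.fst '' (γ.graph ∩ Prod.snd ⁻¹' C)) := by
  have hdom : MeasurableSet γ.dom := γ.isCompact_dom.isClosed.measurableSet
  rw [Fragment.measure, Measure.map_apply_of_aemeasurable
    (γ.lipschitzOnWith_fn.continuousOn.aemeasurable hdom) hC,
    Measure.restrict_apply' hdom, preimage_fn_inter_dom]

end Fragment

/-- For a closed `C ⊆ X`, the map `γ ↦ γ_*𝓛¹(C)` is upper
semi-continuous on `Γ(X)` with the Hausdorff metric on graphs. -/
theorem upperSemicontinuous_pushforward (C : Set X) (hC : IsClosed C) :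
    UpperSemicontinuous (fun γ : Fragment X => (γ.measure C).toReal) := by
  have hgraph : UpperSemicontinuous fun γ : Fragment X =>
      volume (Prod.fst '' (γ.graph ∩ Prod.snd ⁻¹' C)) :=
    (upperSemicontinuous_measure_image_inter volume continuous_fst
      (hC.preimage continuous_snd)).comp continuous_subtype_val
  have hmeasure : UpperSemicontinuous fun γ : Fragment X => γ.measure C := by
    simpa only [Fragment.measure_apply _ hC.measurableSet] using hgraph
  exact hmeasure.ennreal_toReal fun γ => measure_ne_top _ _

end BKO
end
end

section
/- Let X be a metric space, φ : X → ℝⁿ Lipschitz, f : X → ℝ Lipschitz, and x₀ ∈ ind φ. If f is not differentiable with respect to φ at x₀, then x₀ ∈ ind(φ,f), where (φ,f) : X → ℝ^{n+1} is the map x ↦ (φ(x), f(x)). -/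
open MeasureTheory Metric Set Filter Topology ENNReal NNReal
open scoped RealInnerProductSpace

noncomputable section

namespace BKO

variable {X : Type*} [MetricSpace X]

variable {X : Type*} [MetricSpace X]

/-! Suppose `Lip(⟨(φ, f), D⟩, x₀) = 0` for a unit vector `D = (w, a)`. Since `(φ, f)` is
Lipschitz, the slope of `⟨φ, w⟩ + a f` at `x₀` then tends to `0`. If `a = 0`, then `‖w‖ = 1`
and this contradicts `x₀ ∈ ind φ`. If `a ≠ 0`, it says that `-a⁻¹ ⟨·, w⟩` is a derivative of `f`
with respect to `φ` at `x₀`; it is the only one, because two derivatives differ by a linear map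
`M` with `|M (φ x - φ x₀)| = o(d(x, x₀))`, and `x₀ ∈ ind φ` forces `M = 0`. -/

section lipAt

lemma lipAt_nonpos_of_tendsto {g : X → ℝ} {x₀ : X}
    (h : Tendsto (fun x => |g x - g x₀| / dist x x₀) (𝓝[≠] x₀) (𝓝 0)) :
    lipAt g x₀ ≤ 0 := by
  refine le_of_forall_gt_imp_ge_of_dense fun ε hε => ?_
  obtain ⟨δ, hδ, hslope⟩ := Metric.nhdsWithin_basis_ball.eventually_iff.1
    (h.eventually (eventually_lt_nhds hε))
  refine limsup_le_of_le (isCoboundedUnder_le_of_eventually_le _ (x := 0) ?_) ?_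
  · filter_upwards [self_mem_nhdsWithin] with r hr
    exact Real.sSup_nonneg <| by
      rintro _ ⟨y, -, rfl⟩
      exact div_nonneg (abs_nonneg _) (le_of_lt hr)
  · filter_upwards [Ioo_mem_nhdsGT hδ] with r hr
    refine Real.sSup_le ?_ hε.le
    rintro _ ⟨y, hy, rfl⟩
    rcases eq_or_ne y x₀ with rfl | hne
    · simp [hε.le]
    · have hyr : dist y x₀ ≤ r := hy
      calc |g y - g x₀| / r ≤ |g y - g x₀| / dist y x₀ :=
            div_le_div_of_nonneg_left (abs_nonneg _) (dist_pos.2 hne) hyr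
        _ ≤ ε := (hslope ⟨hyr.trans_lt hr.2, hne⟩).le

/-- The Lipschitz bound keeps the suprema in `lipAt` bounded, so that they are not the junk
value `sSup = 0` of an unbounded set of reals. -/
lemma tendsto_of_lipAt_nonpos {g : X → ℝ} {K : ℝ≥0} (hg : LipschitzWith K g) {x₀ : X}
    (h : lipAt g x₀ ≤ 0) :
    Tendsto (fun x => |g x - g x₀| / dist x x₀) (𝓝[≠] x₀) (𝓝 0) := by
  have hle : ∀ r > (0:ℝ), ∀ z ∈ (fun y => |g y - g x₀| / r) '' closedBall x₀ r, z ≤ K := by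
    rintro r hr _ ⟨y, hy, rfl⟩
    rw [div_le_iff₀ hr, ← Real.dist_eq]
    exact (hg.dist_le_mul y x₀).trans (mul_le_mul_of_nonneg_left hy K.2)
  have hbdd : IsBoundedUnder (· ≤ ·) (𝓝[>] (0:ℝ))
      (fun r => sSup ((fun y => |g y - g x₀| / r) '' closedBall x₀ r)) := by
    refine ⟨K, eventually_map.2 ?_⟩
    filter_upwards [self_mem_nhdsWithin] with r hr
    exact Real.sSup_le (hle r hr) K.2
  have hdist : Tendsto (fun x => dist x x₀) (𝓝[≠] x₀) (𝓝[>] 0) :=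
    tendsto_nhdsWithin_of_tendsto_nhds_of_eventually_within _
      (tendsto_nhdsWithin_of_tendsto_nhds
        ((continuous_id.dist continuous_const).tendsto' x₀ 0 (dist_self x₀)))
      (eventually_nhdsWithin_of_forall fun x hx => dist_pos.2 hx)
  refine tendsto_order.2 ⟨fun ε hε => ?_, fun ε hε => ?_⟩
  · exact Eventually.of_forall fun x => hε.trans_le (div_nonneg (abs_nonneg _) dist_nonneg)
  · filter_upwards [hdist.eventually (eventually_lt_of_limsup_lt (h.trans_lt hε) hbdd),
      self_mem_nhdsWithin] with x hx hne
    have hd : 0 < dist x x₀ := dist_pos.2 hne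
    exact (le_csSup ⟨(K : ℝ), hle _ hd⟩ ⟨x, mem_closedBall.2 le_rfl, rfl⟩).trans_lt hx

end lipAt

section snoc

variable {n : ℕ}

lemma inner_snoc (v : E n) (t : ℝ) (D : E (n + 1)) :
    ⟪(WithLp.equiv 2 (Fin (n + 1) → ℝ)).symm (Fin.snoc (WithLp.equiv 2 (Fin n → ℝ) v) t), D⟫ =
      ⟪v, (WithLp.equiv 2 (Fin n → ℝ)).symm (fun i => D i.castSucc)⟫ + t * D (Fin.last n) := by
  simp only [PiLp.inner_apply, RCLike.inner_apply, conj_trivial, Fin.sum_univ_castSucc]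
  simp [mul_comm]

lemma norm_sq_eq_norm_init_sq_add_sq (D : E (n + 1)) :
    ‖D‖ ^ 2 = ‖(WithLp.equiv 2 (Fin n → ℝ)).symm (fun i => D i.castSucc)‖ ^ 2
      + D (Fin.last n) ^ 2 := by
  simp [EuclideanSpace.norm_sq_eq, Fin.sum_univ_castSucc]

end snoc

section ind

variable {n : ℕ} {φ : X → E n} {x₀ : X}

lemma eq_zero_of_tendsto_inner_slope (hx₀ : x₀ ∈ indSet φ) {c : E n}
    (h : Tendsto (fun x => |⟪φ x - φ x₀, c⟫| / dist x x₀) (𝓝[≠] x₀) (𝓝 0)) : c = 0 := by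
  by_contra hc
  have hscale : ∀ x, |⟪φ x, ‖c‖⁻¹ • c⟫ - ⟪φ x₀, ‖c‖⁻¹ • c⟫| / dist x x₀ =
      ‖c‖⁻¹ * (|⟪φ x - φ x₀, c⟫| / dist x x₀) := fun x => by
    rw [← inner_sub_left, real_inner_smul_right, abs_mul, abs_inv, abs_norm, mul_div_assoc]
  have hslope : Tendsto (fun x => |⟪φ x, ‖c‖⁻¹ • c⟫ - ⟪φ x₀, ‖c‖⁻¹ • c⟫| / dist x x₀)
      (𝓝[≠] x₀) (𝓝 0) := by
    simpa only [hscale, mul_zero] using h.const_mul ‖c‖⁻¹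
  exact (hx₀ _ (norm_smul_inv_norm hc)).not_ge (lipAt_nonpos_of_tendsto hslope)

lemma linearMap_eq_of_tendsto (hx₀ : x₀ ∈ indSet φ) {f : X → ℝ} {L₁ L₂ : E n →ₗ[ℝ] ℝ}
    (h₁ : Tendsto (fun x => |f x - f x₀ - L₁ (φ x - φ x₀)| / dist x x₀) (𝓝[≠] x₀) (𝓝 0))
    (h₂ : Tendsto (fun x => |f x - f x₀ - L₂ (φ x - φ x₀)| / dist x x₀) (𝓝[≠] x₀) (𝓝 0)) :
    L₁ = L₂ := by
  set c : E n :=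
    (InnerProductSpace.toDual ℝ (E n)).symm (LinearMap.toContinuousLinearMap (L₁ - L₂))
  have hc : ∀ v, ⟪v, c⟫ = L₁ v - L₂ v := fun v => by
    rw [real_inner_comm, InnerProductSpace.toDual_symm_apply]; rfl
  have hslope : Tendsto (fun x => |⟪φ x - φ x₀, c⟫| / dist x x₀) (𝓝[≠] x₀) (𝓝 0) := by
    refine squeeze_zero (fun x => by positivity) (fun x => ?_)
      (by simpa only [add_zero] using h₁.add h₂)
    rw [hc, ← add_div]
    gcongr
    calc |L₁ (φ x - φ x₀) - L₂ (φ x - φ x₀)|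
        = |(f x - f x₀ - L₁ (φ x - φ x₀)) - (f x - f x₀ - L₂ (φ x - φ x₀))| := by
          rw [abs_sub_comm]; congr 1; ring
      _ ≤ _ := abs_sub _ _
  have hc0 := eq_zero_of_tendsto_inner_slope hx₀ hslope
  ext v
  exact sub_eq_zero.1 (by rw [← hc, hc0, inner_zero_right])

lemma diffWrtAt_of_tendsto (hx₀ : x₀ ∈ indSet φ) {f : X → ℝ} (L : E n →ₗ[ℝ] ℝ)
    (hL : Tendsto (fun x => |f x - f x₀ - L (φ x - φ x₀)| / dist x x₀) (𝓝[≠] x₀) (𝓝 0)) :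
    DiffWrtAt φ f x₀ :=
  ⟨L, hL, fun _ hL' => linearMap_eq_of_tendsto hx₀ hL' hL⟩

lemma diffWrtAt_of_tendsto_inner_add_mul (hx₀ : x₀ ∈ indSet φ) {f : X → ℝ} {w : E n} {a : ℝ}
    (ha : a ≠ 0)
    (h : Tendsto (fun x => |(⟪φ x, w⟫ + f x * a) - (⟪φ x₀, w⟫ + f x₀ * a)| / dist x x₀)
      (𝓝[≠] x₀) (𝓝 0)) :
    DiffWrtAt φ f x₀ := by
  set L : E n →ₗ[ℝ] ℝ := (-a⁻¹) • (innerSL ℝ w).toLinearMap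
  have hL : ∀ x, f x - f x₀ - L (φ x - φ x₀) =
      a⁻¹ * ((⟪φ x, w⟫ + f x * a) - (⟪φ x₀, w⟫ + f x₀ * a)) := fun x => by
    simp only [L, LinearMap.smul_apply, ContinuousLinearMap.coe_coe, innerSL_apply_apply,
      smul_eq_mul, inner_sub_right, real_inner_comm w]
    field_simp
    ring
  refine diffWrtAt_of_tendsto hx₀ L ?_
  simpa only [hL, abs_mul, abs_inv, mul_div_assoc, mul_zero] using h.const_mul |a|⁻¹

end ind

/-- If `x₀ ∈ ind φ` and the Lipschitz function `f` is not differentiable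
with respect to `φ` at `x₀`, then `x₀ ∈ ind (φ, f)`. -/
theorem mem_ind_pair_of_not_diff {n : ℕ} (φ : X → E n) (hφ : ∃ K, LipschitzWith K φ)
    (f : X → ℝ) (hf : ∃ K, LipschitzWith K f) (x₀ : X) (hx₀ : x₀ ∈ indSet φ)
    (hnd : ¬ DiffWrtAt φ f x₀) :
    x₀ ∈ indSet (fun x => (WithLp.equiv 2 (Fin (n + 1) → ℝ)).symm
      (Fin.snoc (WithLp.equiv 2 (Fin n → ℝ) (φ x)) (f x))) := by
  obtain ⟨Kφ, hKφ⟩ := hφ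
  obtain ⟨Kf, hKf⟩ := hf
  intro D hD
  by_contra! hlip
  simp only [inner_snoc] at hlip
  have hnorm := norm_sq_eq_norm_init_sq_add_sq D
  set w : E n := (WithLp.equiv 2 (Fin n → ℝ)).symm (fun i => D i.castSucc)
  set a : ℝ := D (Fin.last n)
  rcases eq_or_ne a 0 with ha | ha
  · have hw : ‖w‖ = 1 := by
      rw [hD, ha] at hnorm
      nlinarith [norm_nonneg w]
    simp only [ha, mul_zero, add_zero] at hlip
    exact (hx₀ w hw).not_ge hlip
  · have hg := ((innerSL ℝ w).lipschitz.comp hKφ).add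
      ((ContinuousLinearMap.toSpanSingleton ℝ a).lipschitz.comp hKf)
    simp only [Function.comp_apply, innerSL_apply_apply, real_inner_comm _ w,
      ContinuousLinearMap.toSpanSingleton_apply, smul_eq_mul] at hg
    exact hnd (diffWrtAt_of_tendsto_inner_add_mul hx₀ ha (tendsto_of_lipAt_nonpos hg hlip))

end BKO
end
end
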